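/- Let ζ ∈ k be a primitive 4th root of unity, let A = k[u]/(u⁴ − 1), and let (σ, δ) be the T(4,2,1)-module-algebra structure on A with σ(u) = ζ·u and δ(u) = γ·u³, where γ² = 2ζ. Then there exist NO k-linear maps T_G, T_X: A → A satisfying all of the following conditions (which together say that the action of T(4,2,1) extends to a D(T(4,2,1))-module-algebra structure on A): T_G(1_A) = 1_A, T_X(1_A) = 0; T_G(vw) = T_G(v)·T_G(w) − 2·T_X(T_G(v))·T_X(T_G³(w)) and T_X(vw) = v·T_X(w) + T_X(v)·T_G²(w) for all v, w ∈ A; T_G⁴ = id; T_X∘T_X = 0; σ∘T_G = T_G∘σ; σ∘T_X = −(T_X∘σ); T_G∘T_X = ζ·(T_X∘T_G); δ∘T_X − T_X∘δ = T_G∘T_G − σ; and δ∘T_G − ζ·(T_G∘δ) = 2·(T_X∘T_G)∘(ζ·σ − T_G∘T_G). -/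

import Mathlib

/-!
The `σ`-eigenspaces of `A` are the lines `k·uⁱ`, so `T_G` preserves them while `T_X`, which
anticommutes with `σ`, swaps `k·u` and `k·u³`. Evaluating `T_X² = 0` at `u` and the twisted Leibniz
rule at `u·u³ = 1`, with `T_G` invertible, forces `T_X u = T_X u³ = 0`. The relation between `δ`
and `T_X` at `u` then reads `T_G² u = σ u = ζ u`, hence `T_G⁴ u = ζ² u = -u ≠ u`.
-/

open Module

/-- A `T(4,2,1)`-module-algebra structure on `A`, given by the action `σ` of the
grouplike `g` and the action `δ` of the `(g,1)`-skew primitive `x`, where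
`g⁴ = 1`, `x² = g² - 1`, `gx = -xg`. -/
def IsT421Action {k A : Type*} [Field k] [CommRing A] [Algebra k A]
    (σ : A ≃ₐ[k] A) (δ : A →ₗ[k] A) : Prop :=
  σ ^ 4 = 1 ∧ δ 1 = 0 ∧
  (∀ a c : A, δ (a * c) = σ a * δ c + δ a * c) ∧
  σ.toLinearMap ∘ₗ δ = -(δ ∘ₗ σ.toLinearMap) ∧
  δ ∘ₗ δ = σ.toLinearMap ∘ₗ σ.toLinearMap - LinearMap.id

theorem Module.Basis.eq_repr_smul_of_apply_eq_smul {ι K M : Type*} [Field K] [AddCommGroup M]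
    [Module K M] (b : Basis ι K M) {f : M →ₗ[K] M} {μ : ι → K} (hμ : Function.Injective μ)
    (hf : ∀ i, f (b i) = μ i • b i) {v : M} {j : ι} (hv : f v = μ j • v) :
    v = b.repr v j • b j := by
  classical
  have hcoord (i : ι) : b.coord i ∘ₗ f = μ i • b.coord i :=
    b.ext fun l => by
      by_cases h : l = i
      · subst h; simp [hf]
      · simp [hf, h]
  refine b.repr.injective (Finsupp.ext fun i => ?_)
  by_cases hij : i = j
  · subst hij; simp
  · have h := LinearMap.congr_fun (hcoord i) v
    simp only [LinearMap.comp_apply, hv, map_smul, LinearMap.smul_apply, Basis.coord_apply,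
      smul_eq_mul] at h
    have hvi : b.repr v i = 0 := by
      by_contra hvi
      exact hij (hμ (mul_right_cancel₀ hvi h).symm)
    simp [hvi, Ne.symm hij]

theorem LinearMap.apply_apply_eq_smul_of_comp_comm {K M : Type*} [CommSemiring K]
    [AddCommMonoid M] [Module K M] {f g : M →ₗ[K] M} (hfg : f ∘ₗ g = g ∘ₗ f) {v : M} {μ : K}
    (hv : f v = μ • v) : f (g v) = μ • g v := by
  rw [← LinearMap.comp_apply, hfg, LinearMap.comp_apply, hv, map_smul]

theorem LinearMap.apply_apply_eq_neg_smul_of_comp_anticomm {K M : Type*} [CommRing K]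
    [AddCommGroup M] [Module K M] {f g : M →ₗ[K] M} (hfg : f ∘ₗ g = -(g ∘ₗ f)) {v : M} {μ : K}
    (hv : f v = μ • v) : f (g v) = (-μ) • g v := by
  rw [← LinearMap.comp_apply, hfg, LinearMap.neg_apply, LinearMap.comp_apply, hv, map_smul,
    neg_smul]

theorem exists_eq_smul_pow_of_map_eq_pow_smul {k A : Type*} [Field k] [CommRing A] [Algebra k A]
    {n : ℕ} {ζ : k} (hζ : IsPrimitiveRoot ζ n) {u : A} (b : Basis (Fin n) k A)
    (hb : ∀ i, b i = u ^ (i : ℕ)) {σ : A ≃ₐ[k] A} (hσu : σ u = ζ • u) {v : A} {j : ℕ}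
    (hj : j < n) (hv : σ v = ζ ^ j • v) : ∃ c : k, v = c • u ^ j := by
  have hσb (i : Fin n) : σ.toLinearMap (b i) = ζ ^ (i : ℕ) • b i := by
    rw [hb, AlgEquiv.toLinearMap_apply, map_pow, hσu, smul_pow]
  have hinj : Function.Injective fun i : Fin n => ζ ^ (i : ℕ) :=
    fun i i' h => Fin.ext (hζ.pow_inj i.2 i'.2 h)
  exact ⟨_, (b.eq_repr_smul_of_apply_eq_smul (j := ⟨j, hj⟩) hinj hσb hv).trans (by rw [hb])⟩

theorem twistedDerivation_apply_eq_zero {k A : Type*} [Field k] [CommRing A] [Nontrivial A]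
    [Algebra k A] {u : A} (hu : u ^ 4 = 1) {T D : A →ₗ[k] A} (hD1 : D 1 = 0)
    (hDmul : ∀ v w : A, D (v * w) = v * D w + D v * (T ^ 2) w) (hDD : D ∘ₗ D = 0)
    {c d₁ d₃ : k} (hc : c ≠ 0) (hT : T (u ^ 3) = c • u ^ 3) (h₁ : D u = d₁ • u ^ 3)
    (h₃ : D (u ^ 3) = d₃ • u) : D u = 0 ∧ D (u ^ 3) = 0 := by
  have hpow_ne (i : ℕ) : u ^ i ≠ 0 := ((IsUnit.of_pow_eq_one hu four_ne_zero).pow i).ne_zero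
  have hsq : d₁ * d₃ = 0 := by
    have h := LinearMap.congr_fun hDD u
    rw [LinearMap.comp_apply, h₁, map_smul, h₃, smul_smul, LinearMap.zero_apply] at h
    simpa [pow_one u ▸ hpow_ne 1] using h
  have hmul : d₃ + d₁ * c ^ 2 = 0 := by
    have h := hDmul u (u ^ 3)
    rw [h₃, h₁, sq T, Module.End.mul_apply, hT, map_smul, hT, ← pow_succ', hu, hD1] at h
    have h' : (d₃ + d₁ * c ^ 2) • u ^ 2 = 0 := by
      simp only [Algebra.smul_def, map_add, map_mul, map_pow] at h ⊢
      linear_combination -h - algebraMap k A d₁ * algebraMap k A c ^ 2 * u ^ 2 * hu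
    simpa [hpow_ne 2] using h'
  have hd₁ : d₁ = 0 := by
    have : (d₁ * c) ^ 2 = 0 := by linear_combination d₁ * hmul - hsq
    simpa [hc] using this
  have hd₃ : d₃ = 0 := by simpa [hd₁] using hmul
  simp [h₁, h₃, hd₁, hd₃]

theorem stmt_14_general (k : Type*) [Field k]
    (ζ : k) (hζ : IsPrimitiveRoot ζ 4)
    (A : Type*) [CommRing A] [Algebra k A]
    (u : A) (b : Module.Basis (Fin 4) k A) (hb : ∀ i : Fin 4, b i = u ^ (i : ℕ))
    (hu : u ^ 4 = 1)
    (σ : A ≃ₐ[k] A) (δ : A →ₗ[k] A)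
    (γ : k)
    (hσu : σ u = ζ • u) (hδu : δ u = γ • u ^ 3) :
    ¬ ∃ (TG TX : A →ₗ[k] A),
        TG 1 = 1 ∧ TX 1 = 0 ∧
        (∀ v w : A, TG (v * w) = TG v * TG w - 2 * (TX (TG v) * TX ((TG ^ 3) w))) ∧
        (∀ v w : A, TX (v * w) = v * TX w + TX v * (TG ^ 2) w) ∧
        TG ^ 4 = LinearMap.id ∧
        TX ∘ₗ TX = 0 ∧
        σ.toLinearMap ∘ₗ TG = TG ∘ₗ σ.toLinearMap ∧
        σ.toLinearMap ∘ₗ TX = -(TX ∘ₗ σ.toLinearMap) ∧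
        TG ∘ₗ TX = ζ • (TX ∘ₗ TG) ∧
        δ ∘ₗ TX - TX ∘ₗ δ = TG ∘ₗ TG - σ.toLinearMap ∧
        δ ∘ₗ TG - ζ • (TG ∘ₗ δ) =
          (2 : k) • ((TX ∘ₗ TG) ∘ₗ (ζ • σ.toLinearMap - TG ∘ₗ TG)) := by
  rintro ⟨TG, TX, -, hX1, -, hXmul, hG4, hXX, hσG, hσX, -, hδX, -⟩
  have hζ2 : ζ ^ 2 = -1 := (hζ.pow_of_dvd two_ne_zero (by norm_num)).eq_neg_one_of_two_right
  have hu0 : u ≠ 0 := by simpa [hb] using b.ne_zero 1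
  have : Nontrivial A := ⟨⟨u, 0, hu0⟩⟩
  have hσu3 : σ.toLinearMap (u ^ 3) = ζ ^ 3 • u ^ 3 := by
    rw [AlgEquiv.toLinearMap_apply, map_pow, hσu, smul_pow]
  obtain ⟨c, hc⟩ := exists_eq_smul_pow_of_map_eq_pow_smul hζ b hb hσu (by norm_num)
    (LinearMap.apply_apply_eq_smul_of_comp_comm hσG hσu3)
  obtain ⟨d₁, hd₁⟩ := exists_eq_smul_pow_of_map_eq_pow_smul hζ b hb hσu (j := 3) (by norm_num)
    (by simpa [hσu, show -ζ = ζ ^ 3 by linear_combination -ζ * hζ2] using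
      LinearMap.apply_apply_eq_neg_smul_of_comp_anticomm hσX (v := u) hσu)
  obtain ⟨d₃, hd₃⟩ := exists_eq_smul_pow_of_map_eq_pow_smul hζ b hb hσu (j := 1) (by norm_num)
    (by simpa [show -ζ ^ 3 = ζ by linear_combination -ζ * hζ2] using
      LinearMap.apply_apply_eq_neg_smul_of_comp_anticomm hσX hσu3)
  have hc0 : c ≠ 0 := by
    rintro rfl
    have h := LinearMap.congr_fun hG4 (u ^ 3)
    rw [pow_succ, Module.End.mul_apply, hc, zero_smul, map_zero] at h
    exact (by simpa [hb] using b.ne_zero 3 : u ^ 3 ≠ 0) h.symm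
  obtain ⟨hXu, hXu3⟩ := twistedDerivation_apply_eq_zero hu hX1 hXmul hXX hc0 hc hd₁
    (pow_one u ▸ hd₃)
  have hGG : TG (TG u) = ζ • u := by
    simpa [hXu, hXu3, hδu, hσu, sub_eq_zero] using (LinearMap.congr_fun hδX u).symm
  have hu_neg : u = -u :=
    calc u = TG (TG (TG (TG u))) := (LinearMap.congr_fun hG4 u).symm
      _ = ζ ^ 2 • u := by rw [hGG, map_smul, map_smul, hGG, smul_smul, sq]
      _ = -u := by rw [hζ2, neg_one_smul]
  have h2 : (2 : k) ≠ 0 := fun h => hζ.neZero'.out (by push_cast; linear_combination 2 * h)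
  have h2u : (2 : k) • u = 0 := (two_smul k u).trans (eq_neg_iff_add_eq_zero.mp hu_neg)
  exact hu0 ((smul_eq_zero.mp h2u).resolve_left h2)

/-- The `T(4,2,1)`-module-algebra structure on `A = k[u]/(u⁴ - 1)` given by
`σ(u) = ζ·u`, `δ(u) = γ·u³` (`γ² = 2ζ`) does NOT extend to a
`D(T(4,2,1))`-module-algebra structure: there are no linear maps `T_G, T_X`
(the actions of the dual generators `G, X`) satisfying the required conditions. -/
theorem stmt_14 (k : Type*) [Field k] [IsAlgClosed k] [CharZero k]
    (ζ : k) (hζ : IsPrimitiveRoot ζ 4)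
    (A : Type*) [CommRing A] [Algebra k A]
    (u : A) (b : Module.Basis (Fin 4) k A) (hb : ∀ i : Fin 4, b i = u ^ (i : ℕ))
    (hu : u ^ 4 = 1)
    (σ : A ≃ₐ[k] A) (δ : A →ₗ[k] A)
    (hact : IsT421Action σ δ)
    (γ : k) (hγ : γ ^ 2 = 2 * ζ)
    (hσu : σ u = ζ • u) (hδu : δ u = γ • u ^ 3) :
    ¬ ∃ (TG TX : A →ₗ[k] A),
        TG 1 = 1 ∧ TX 1 = 0 ∧
        (∀ v w : A, TG (v * w) = TG v * TG w - 2 * (TX (TG v) * TX ((TG ^ 3) w))) ∧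
        (∀ v w : A, TX (v * w) = v * TX w + TX v * (TG ^ 2) w) ∧
        TG ^ 4 = LinearMap.id ∧
        TX ∘ₗ TX = 0 ∧
        σ.toLinearMap ∘ₗ TG = TG ∘ₗ σ.toLinearMap ∧
        σ.toLinearMap ∘ₗ TX = -(TX ∘ₗ σ.toLinearMap) ∧
        TG ∘ₗ TX = ζ • (TX ∘ₗ TG) ∧
        δ ∘ₗ TX - TX ∘ₗ δ = TG ∘ₗ TG - σ.toLinearMap ∧
        δ ∘ₗ TG - ζ • (TG ∘ₗ δ) =
          (2 : k) • ((TX ∘ₗ TG) ∘ₗ (ζ • σ.toLinearMap - TG ∘ₗ TG)) :=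
  stmt_14_general k ζ hζ A u b hb hu σ δ γ hσu hδu
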